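/- Let α be a type, I a type of labels with a transitive well-founded order ≻, let (→_a)_{a∈I} be a family of relations on α with union →_A, and let →_B be a confluent relation on α contained in ↠_A. Assume conditions (1) and (2): (1) for all a, b ∈ I and every peak y ←_a x →_b z, either there exists w with y ↠_A w and z ↠_A w, or there exist labels a', b' with {a,b} ≻_mul {a',b'} (multiset extension of ≻) and elements u, v with u →_{a'} y, u ↔*_B v, and v →_{b'} z; (2) for every a ∈ I and every peak y ←_a x →_B z, either there exists w with y ↠_B w and z →_a w, or there exist a' with a ≻ a' and u, v with y ↠_B u, v →_{a'} u, and v ↔*_B z. Then for all labels a, b ∈ I and all natural numbers m, n: whenever y ←_a x, x →_B^m u, w →_B^n u, and w →_b z (where →_B^k denotes k-fold composition of →_B), there exist elements p, q, c such that y ↠_B p, p ↠_A c, z ↠_B q, and q ↠_A c. -/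

import Mathlib

/-- Union of a labelled family of relations. -/
def LabelledUnion {α I : Type*} (r : I → α → α → Prop) : α → α → Prop :=
  fun a b => ∃ l, r l a b

/-- Conversion: reflexive–transitive closure of the symmetric closure. -/
def Conv {α : Type*} (r : α → α → Prop) : α → α → Prop :=
  Relation.ReflTransGen (fun a b => r a b ∨ r b a)

/-- `k`-fold relational composition. -/
def RelPow {α : Type*} (r : α → α → Prop) : ℕ → α → α → Prop
  | 0 => Eq
  | n + 1 => fun a c => ∃ b, r a b ∧ RelPow r n b c

/-- Dershowitz–Manna multiset extension: `DMLT lt N M` means `M ≻_mul N`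
where `lt y x` means `x ≻ y`. -/
def DMLT {I : Type*} (lt : I → I → Prop) (N M : Multiset I) : Prop :=
  ∃ X Y Z : Multiset I, X ≠ 0 ∧ M = Z + X ∧ N = Z + Y ∧ ∀ y ∈ Y, ∃ x ∈ X, lt y x

/-!
Induct on the label pair `{a, b}` in the Dershowitz–Manna order, which is contained in the
transitive closure of `Relation.CutExpand` and hence well-founded, and, for fixed labels, on the two
`B`-paths of the valley `x ↠_B u ↞_B w`. Condition (2) pushes a `B`-step out of the valley past
the `a`-step, either keeping the labels and shortening the valley or lowering one label;
condition (1) resolves the remaining genuine peak, again either outright or with smaller labels.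
Every conversion `↔*_B` produced on the way is a valley, because `→_B` is confluent.
-/

open Relation

section DershowitzManna

variable {I : Type*} {lt : I → I → Prop} {M N : Multiset I}

theorem DMLT.transGen_cutExpand (h : DMLT lt N M) : TransGen (CutExpand lt) N M := by
  classical
  obtain ⟨X, Y, Z, hX, rfl, rfl, hY⟩ := h
  induction X using Multiset.induction_on generalizing Y Z with
  | empty => exact absurd rfl hX
  | cons x X ih =>
    obtain rfl | hX := eq_or_ne X 0
    · refine .single ((cutExpand_add_left Z).2 (cutExpand_singleton fun y hy => ?_))
      simpa using hY y hy
    · set Y' := Y.filter (lt · x)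
      have hstep : CutExpand lt (Z + Y' + X) (Z + x ::ₘ X) :=
        ⟨Y', x, fun y hy => (Multiset.mem_filter.1 hy).2, by
          rw [← Multiset.singleton_add]; abel⟩
      have hrest : TransGen (CutExpand lt) (Z + Y' + Y.filter (¬ lt · x)) (Z + Y' + X) := by
        refine ih _ _ hX fun y hy => ?_
        obtain ⟨hyY, hyx⟩ := Multiset.mem_filter.1 hy
        obtain ⟨x', hx', hyx'⟩ := hY y hyY
        rcases Multiset.mem_cons.1 hx' with rfl | hx'
        · exact absurd hyx' hyx
        · exact ⟨x', hx', hyx'⟩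
      rw [add_assoc, Multiset.filter_add_not] at hrest
      exact hrest.tail hstep

end DershowitzManna

section Relations

variable {α : Type*} {r : α → α → Prop} {x y : α}

theorem RelPow.reflTransGen : ∀ {m : ℕ} {x y : α}, RelPow r m x y → ReflTransGen r x y
  | 0, _, _, rfl => .refl
  | _ + 1, _, _, ⟨_, hxb, hby⟩ => .head hxb hby.reflTransGen

theorem Conv.join (hconf : ∀ a b c, ReflTransGen r a b → ReflTransGen r a c →
      Join (ReflTransGen r) b c)
    (h : Conv r x y) : Join (ReflTransGen r) x y := by
  have hequiv := equivalence_join hconf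
  induction h with
  | refl => exact hequiv.refl _
  | tail _ hbc ih =>
    refine hequiv.trans ih ?_
    rcases hbc with hbc | hcb
    · exact ⟨_, .single hbc, .refl⟩
    · exact ⟨_, .refl, .single hcb⟩

end Relations

section Joinability

variable {α I : Type*} {lt : I → I → Prop} {ra : I → α → α → Prop}
  {rb : α → α → Prop} {y y' z c : α}

def BAJoinable (ra : I → α → α → Prop) (rb : α → α → Prop) : α → α → Prop :=
  Join (Comp (ReflTransGen rb) (ReflTransGen (LabelledUnion ra)))

theorem BAJoinable.symm (h : BAJoinable ra rb y z) : BAJoinable ra rb z y :=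
  let ⟨c, hyc, hzc⟩ := h
  ⟨c, hzc, hyc⟩

theorem BAJoinable.head (hyy' : ReflTransGen rb y y') (h : BAJoinable ra rb y' z) :
    BAJoinable ra rb y z :=
  let ⟨c, ⟨p, hy'p, hpc⟩, hzc⟩ := h
  ⟨c, ⟨p, hyy'.trans hy'p, hpc⟩, hzc⟩

theorem BAJoinable.of_reflTransGen (hyc : ReflTransGen (LabelledUnion ra) y c)
    (hzc : ReflTransGen (LabelledUnion ra) z c) : BAJoinable ra rb y z :=
  ⟨c, ⟨y, .refl, hyc⟩, ⟨z, .refl, hzc⟩⟩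

/-- One use of condition (2): the peak `y ←_a x →_B x₁` is resolved either with the same
label `a` from `x₁`, which is one `B`-step closer to `w`, or with a smaller label. -/
theorem BAJoinable.of_rb_head
    (hbconf : ∀ a b c, ReflTransGen rb a b → ReflTransGen rb a c →
      ∃ d, ReflTransGen rb b d ∧ ReflTransGen rb c d)
    (h2 : ∀ (a : I) (x y z : α), ra a x y → rb x z →
        (∃ w, ReflTransGen rb y w ∧ ra a z w) ∨
        (∃ (a' : I) (u v : α), lt a' a ∧ ReflTransGen rb y u ∧ ra a' v u ∧ Conv rb v z))
    {a : I} {x x₁ w : α} (hxx₁ : rb x x₁) (hx₁w : Join (ReflTransGen rb) x₁ w)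
    (hxy : ra a x y)
    (ih_same : ∀ y', ra a x₁ y' → BAJoinable ra rb y' z)
    (ih_lower : ∀ a', lt a' a → ∀ v y', ra a' v y' → Join (ReflTransGen rb) v w →
      BAJoinable ra rb y' z) :
    BAJoinable ra rb y z := by
  rcases h2 a x y x₁ hxy hxx₁ with
    ⟨y', hyy', hx₁y'⟩ | ⟨a', u, v, ha', hyu, hvu, hvx₁⟩
  · exact (ih_same y' hx₁y').head hyy'
  · have hvw := (equivalence_join hbconf).trans (hvx₁.join hbconf) hx₁w
    exact (ih_lower a' ha' v u hvu hvw).head hyu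

theorem BAJoinable.of_join (hwf : WellFounded lt)
    (hbconf : ∀ a b c, ReflTransGen rb a b → ReflTransGen rb a c →
      ∃ d, ReflTransGen rb b d ∧ ReflTransGen rb c d)
    (h1 : ∀ (a b : I) (x y z : α), ra a x y → ra b x z →
        (∃ w, ReflTransGen (LabelledUnion ra) y w ∧ ReflTransGen (LabelledUnion ra) z w) ∨
        (∃ (a' b' : I) (u v : α), DMLT lt {a', b'} {a, b} ∧
              ra a' u y ∧ Conv rb u v ∧ ra b' v z))
    (h2 : ∀ (a : I) (x y z : α), ra a x y → rb x z →
        (∃ w, ReflTransGen rb y w ∧ ra a z w) ∨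
        (∃ (a' : I) (u v : α), lt a' a ∧ ReflTransGen rb y u ∧ ra a' v u ∧ Conv rb v z))
    (a b : I) (x w y z : α) (hxy : ra a x y) (hxw : Join (ReflTransGen rb) x w)
    (hwz : ra b w z) : BAJoinable ra rb y z := by
  suffices ∀ p : I × I, ∀ x w y z, ra p.1 x y → Join (ReflTransGen rb) x w → ra p.2 w z →
      BAJoinable ra rb y z from this (a, b) x w y z hxy hxw hwz
  intro p
  induction p using (InvImage.wf (fun p : I × I => ({p.1, p.2} : Multiset I))
    hwf.cutExpand.transGen).induction with
  | _ p ih =>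
  obtain ⟨a, b⟩ := p
  rintro x w y z hxy ⟨u, hxu, hwu⟩ hwz
  induction hxu using ReflTransGen.head_induction_on generalizing y with
  | refl =>
    induction hwu using ReflTransGen.head_induction_on generalizing z with
    | refl =>
      rcases h1 a b _ y z hxy hwz with ⟨c, hyc, hzc⟩ | ⟨a', b', u, v, hlt, huy, huv, hvz⟩
      · exact .of_reflTransGen hyc hzc
      · exact ih (a', b') hlt.transGen_cutExpand u v y z huy (huv.join hbconf) hvz
    | head hww₁ hw₁u ihw =>
      refine (BAJoinable.of_rb_head hbconf h2 hww₁ ⟨_, hw₁u, .refl⟩ hwz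
        (fun z' hw₁z' => (ihw z' hw₁z').symm) fun b' hb' v z' hvz' ⟨t, hvt, hxt⟩ => ?_).symm
      exact (ih (a, b') (.single (cutExpand_pair_right hb')) _ v y z' hxy ⟨t, hxt, hvt⟩
        hvz').symm
  | head hxx₁ hx₁u ihx =>
    exact BAJoinable.of_rb_head hbconf h2 hxx₁ ⟨_, hx₁u, hwu⟩ hxy ihx
      fun a' ha' v y' hvy' hvw =>
        ih (a', b) (.single (cutExpand_pair_left ha')) v w y' z hvy' hvw hwz

end Joinability

theorem stmt_5_general {α I : Type*} (lt : I → I → Prop)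
    (hwf : WellFounded lt)
    (ra : I → α → α → Prop) (rb : α → α → Prop)
    (hbconf : ∀ a b c, Relation.ReflTransGen rb a b → Relation.ReflTransGen rb a c →
      ∃ d, Relation.ReflTransGen rb b d ∧ Relation.ReflTransGen rb c d)
    (h1 : ∀ (a b : I) (x y z : α), ra a x y → ra b x z →
        (∃ w, Relation.ReflTransGen (LabelledUnion ra) y w ∧
              Relation.ReflTransGen (LabelledUnion ra) z w) ∨
        (∃ (a' b' : I) (u v : α), DMLT lt {a', b'} {a, b} ∧
              ra a' u y ∧ Conv rb u v ∧ ra b' v z))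
    (h2 : ∀ (a : I) (x y z : α), ra a x y → rb x z →
        (∃ w, Relation.ReflTransGen rb y w ∧ ra a z w) ∨
        (∃ (a' : I) (u v : α), lt a' a ∧
              Relation.ReflTransGen rb y u ∧ ra a' v u ∧ Conv rb v z)) :
    ∀ (a b : I) (m n : ℕ) (x y u w z : α),
      ra a x y → RelPow rb m x u → RelPow rb n w u → ra b w z →
      ∃ p q c, Relation.ReflTransGen rb y p ∧
               Relation.ReflTransGen (LabelledUnion ra) p c ∧
               Relation.ReflTransGen rb z q ∧
               Relation.ReflTransGen (LabelledUnion ra) q c := by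
  intro a b m n x y u w z hxy hxu hwu hwz
  obtain ⟨c, ⟨p, hyp, hpc⟩, ⟨q, hzq, hqc⟩⟩ :=
    BAJoinable.of_join hwf hbconf h1 h2 a b x w y z hxy
      ⟨u, hxu.reflTransGen, hwu.reflTransGen⟩ hwz
  exact ⟨p, q, c, hyp, hpc, hzq, hqc⟩

/-- The claim in the proof of the abstract confluence criterion. -/
theorem stmt_5 {α I : Type*} (lt : I → I → Prop)
    (htrans : Transitive lt) (hwf : WellFounded lt)
    (ra : I → α → α → Prop) (rb : α → α → Prop)
    (hsub : ∀ a b, rb a b → Relation.ReflTransGen (LabelledUnion ra) a b)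
    (hbconf : ∀ a b c, Relation.ReflTransGen rb a b → Relation.ReflTransGen rb a c →
      ∃ d, Relation.ReflTransGen rb b d ∧ Relation.ReflTransGen rb c d)
    (h1 : ∀ (a b : I) (x y z : α), ra a x y → ra b x z →
        (∃ w, Relation.ReflTransGen (LabelledUnion ra) y w ∧
              Relation.ReflTransGen (LabelledUnion ra) z w) ∨
        (∃ (a' b' : I) (u v : α), DMLT lt {a', b'} {a, b} ∧
              ra a' u y ∧ Conv rb u v ∧ ra b' v z))
    (h2 : ∀ (a : I) (x y z : α), ra a x y → rb x z →
        (∃ w, Relation.ReflTransGen rb y w ∧ ra a z w) ∨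
        (∃ (a' : I) (u v : α), lt a' a ∧
              Relation.ReflTransGen rb y u ∧ ra a' v u ∧ Conv rb v z)) :
    ∀ (a b : I) (m n : ℕ) (x y u w z : α),
      ra a x y → RelPow rb m x u → RelPow rb n w u → ra b w z →
      ∃ p q c, Relation.ReflTransGen rb y p ∧
               Relation.ReflTransGen (LabelledUnion ra) p c ∧
               Relation.ReflTransGen rb z q ∧
               Relation.ReflTransGen (LabelledUnion ra) q c :=
  stmt_5_general lt hwf ra rb hbconf h1 h2
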